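/- For n ≥ 2 and k ≥ 2, a_{n+1,k,ℓ} ≤ a_{n,k,ℓ} + 2^k·n^{k-2}, where a_{N,k,ℓ} is the minimum number of ℓ-rooks (ℓ ≥ 2) needed to cover {0,...,N-1}^k. -/

import Mathlib

/-- An ℓ-rook in `{0,...,n-1}^k`: a point together with a set of chosen coordinate
directions. -/
abbrev Rook (n k : ℕ) := (Fin k → Fin n) × Finset (Fin k)

/-- A rook covers itself and every point differing from it in exactly one of its
chosen coordinates. -/
def Rook.covers {n k : ℕ} (R : Rook n k) (q : Fin k → Fin n) : Prop :=
  q = R.1 ∨ ∃ i ∈ R.2, q i ≠ R.1 i ∧ ∀ j, j ≠ i → q j = R.1 j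

/-- `S` is a covering of the hypercube by ℓ-rooks. -/
def IsCover (n k ℓ : ℕ) (S : Finset (Rook n k)) : Prop :=
  (∀ R ∈ S, R.2.card = ℓ) ∧ ∀ q : Fin k → Fin n, ∃ R ∈ S, R.covers q

/-- `aval n k ℓ` : the minimum number of ℓ-rooks needed to cover `{0,...,n-1}^k`. -/
noncomputable def aval (n k ℓ : ℕ) : ℕ :=
  sInf {s | ∃ S : Finset (Rook n k), IsCover n k ℓ S ∧ S.card = s}

/-!
An optimal cover of `[n]^k` still covers every point of `[n+1]^k` with no coordinate equal to `n`.
A point `q` with `q i = n` is covered by the rook at `q` with coordinate `j i ≠ i` reset to `0`,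
moving in a direction set containing `j i`; all these rooks lie in the `k` families
`{f | f i = n ∧ f (j i) = 0}` of size `(n+1)^(k-2)`. Finally `k (n+1)^(k-2) ≤ 2^k n^(k-2)` for
`n ≥ 2`, because `2 (n+1) ≤ 3 n` and `(m+2) 3^m ≤ 4^(m+1)`.
-/

open Finset Function

lemma card_filter_apply_eq_and_apply_eq_le {ι α : Type*} [Fintype ι] [DecidableEq ι]
    [Fintype α] [DecidableEq α] {i j : ι} (hij : i ≠ j) (a b : α) :
    #{f : ι → α | f i = a ∧ f j = b} ≤ Fintype.card α ^ (Fintype.card ι - 2) := by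
  set T : Finset ι := {i, j}ᶜ
  have hT : #T = Fintype.card ι - 2 := by
    rw [card_compl, card_pair hij]
  have hrestrict : Set.InjOn (fun f : ι → α => fun m : T => f m)
      {f : ι → α | f i = a ∧ f j = b} := by
    rintro f ⟨hfi, hfj⟩ g ⟨hgi, hgj⟩ hfg
    funext m
    by_cases hm : m ∈ T
    · exact congrFun hfg ⟨m, hm⟩
    · obtain rfl | rfl : m = i ∨ m = j := by simpa [T, or_iff_not_imp_left] using hm
      exacts [hfi.trans hgi.symm, hfj.trans hgj.symm]
  calc #{f : ι → α | f i = a ∧ f j = b}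
      ≤ #(univ : Finset (T → α)) :=
        card_le_card_of_injOn _ (fun _ _ => mem_coe.2 (mem_univ _))
          (fun f hf g hg => hrestrict (by simpa using hf) (by simpa using hg))
    _ = Fintype.card α ^ (Fintype.card ι - 2) := by
        rw [card_univ, Fintype.card_fun, Fintype.card_coe, hT]

lemma add_two_mul_three_pow_le_four_pow : ∀ m : ℕ, (m + 2) * 3 ^ m ≤ 4 ^ (m + 1)
  | 0 => by norm_num
  | m + 1 => by
    have ih := add_two_mul_three_pow_le_four_pow m
    have h34 : 3 ^ (m + 1) ≤ 4 ^ (m + 1) := Nat.pow_le_pow_left (by norm_num) _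
    calc (m + 1 + 2) * 3 ^ (m + 1) = 3 * ((m + 2) * 3 ^ m) + 3 ^ (m + 1) := by ring
      _ ≤ 3 * 4 ^ (m + 1) + 4 ^ (m + 1) := by gcongr
      _ = 4 ^ (m + 1 + 1) := by ring

lemma add_two_mul_succ_pow_le {n : ℕ} (hn : 2 ≤ n) (m : ℕ) :
    (m + 2) * (n + 1) ^ m ≤ 2 ^ (m + 2) * n ^ m := by
  refine Nat.le_of_mul_le_mul_left ?_ (pow_pos two_pos m)
  calc 2 ^ m * ((m + 2) * (n + 1) ^ m) = (m + 2) * (2 * (n + 1)) ^ m := by rw [mul_pow]; ring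
    _ ≤ (m + 2) * (3 * n) ^ m := by gcongr (m + 2) * ?_ ^ m; omega
    _ = (m + 2) * 3 ^ m * n ^ m := by ring
    _ ≤ 4 ^ (m + 1) * n ^ m := by gcongr; exact add_two_mul_three_pow_le_four_pow m
    _ = 2 ^ m * (2 ^ (m + 2) * n ^ m) := by
        rw [show (4 : ℕ) = 2 ^ 2 by norm_num, ← pow_mul]; ring

namespace Rook

variable {n m k : ℕ}

def map (e : Fin n → Fin m) (R : Rook n k) : Rook m k := (e ∘ R.1, R.2)

lemma covers.map {e : Fin n → Fin m} (he : Injective e) {R : Rook n k} {q : Fin k → Fin n}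
    (h : R.covers q) : (R.map e).covers (e ∘ q) := by
  rcases h with rfl | ⟨i, hi, hqi, hq⟩
  · exact Or.inl rfl
  · exact Or.inr ⟨i, hi, he.ne hqi, fun j hj => congrArg e (hq j hj)⟩

lemma covers_mk_update {D : Finset (Fin k)} {j : Fin k} (hj : j ∈ D)
    (q : Fin k → Fin n) (a : Fin n) : covers (update q j a, D) q := by
  by_cases hqj : q j = a
  · exact Or.inl (by rw [← hqj, update_eq_self])
  · exact Or.inr ⟨j, hj, by simpa using hqj, fun i hi => (update_of_ne hi a q).symm⟩

end Rook

lemma aval_le_card {n k ℓ : ℕ} {S : Finset (Rook n k)} (hS : IsCover n k ℓ S) :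
    aval n k ℓ ≤ #S :=
  Nat.sInf_le ⟨S, hS, rfl⟩

lemma exists_isCover_card_eq_aval {n k ℓ : ℕ} (hℓk : ℓ ≤ k) :
    ∃ S : Finset (Rook n k), IsCover n k ℓ S ∧ #S = aval n k ℓ := by
  obtain ⟨D, -, hD⟩ := exists_subset_card_eq (s := (univ : Finset (Fin k))) (by simpa using hℓk)
  have hcover : IsCover n k ℓ (univ.image fun p => (p, D)) :=
    ⟨by simpa using fun _ => hD, fun q => ⟨(q, D), mem_image_of_mem _ (mem_univ q), Or.inl rfl⟩⟩
  exact Nat.sInf_mem (s := {s | ∃ S : Finset (Rook n k), IsCover n k ℓ S ∧ #S = s})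
    ⟨_, _, hcover, rfl⟩

section Boundary

variable {n k : ℕ}

def boundaryRooks (j : Fin k → Fin k) (D : Fin k → Finset (Fin k)) :
    Finset (Rook (n + 1) k) :=
  univ.biUnion fun i =>
    ({f : Fin k → Fin (n + 1) | f i = Fin.last n ∧ f (j i) = 0} : Finset _).image (·, D (j i))

lemma card_boundaryRooks_le {j : Fin k → Fin k} (hj : ∀ i, j i ≠ i) (D : Fin k → Finset (Fin k)) :
    #(boundaryRooks (n := n) j D) ≤ k * (n + 1) ^ (k - 2) :=
  calc #(boundaryRooks (n := n) j D)
      ≤ ∑ i : Fin k, #({f : Fin k → Fin (n + 1) | f i = Fin.last n ∧ f (j i) = 0} : Finset _) :=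
        card_biUnion_le.trans (sum_le_sum fun _ _ => card_image_le)
    _ ≤ ∑ _i : Fin k, (n + 1) ^ (k - 2) := sum_le_sum fun i _ => by
        simpa using card_filter_apply_eq_and_apply_eq_le (hj i).symm (Fin.last n) 0
    _ = k * (n + 1) ^ (k - 2) := by simp

lemma isCover_image_map_castSucc_union_boundaryRooks {ℓ : ℕ} {S : Finset (Rook n k)}
    (hS : IsCover n k ℓ S) {j : Fin k → Fin k} (hj : ∀ i, j i ≠ i) {D : Fin k → Finset (Fin k)}
    (hD : ∀ d, d ∈ D d) (hDcard : ∀ d, #(D d) = ℓ) :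
    IsCover (n + 1) k ℓ (S.image (Rook.map Fin.castSucc) ∪ boundaryRooks j D) := by
  refine ⟨?_, fun q => ?_⟩
  · simp only [mem_union, mem_image, boundaryRooks, mem_biUnion]
    rintro _ (⟨R, hR, rfl⟩ | ⟨i, -, f, -, rfl⟩)
    exacts [hS.1 R hR, hDcard _]
  by_cases hlast : ∃ i, q i = Fin.last n
  · obtain ⟨i, hi⟩ := hlast
    refine ⟨(update q (j i) 0, D (j i)), mem_union_right _ ?_, Rook.covers_mk_update (hD _) q 0⟩
    simp only [boundaryRooks, mem_biUnion, mem_image, mem_filter, mem_univ, true_and]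
    exact ⟨i, _, ⟨by rw [update_of_ne (hj i).symm]; exact hi, update_self ..⟩, rfl⟩
  · push Not at hlast
    obtain ⟨q₀, rfl⟩ : ∃ q₀ : Fin k → Fin n, Fin.castSucc ∘ q₀ = q :=
      ⟨fun i => (q i).castPred (hlast i), funext fun i => Fin.castSucc_castPred _ _⟩
    obtain ⟨R, hR, hcov⟩ := hS.2 q₀
    exact ⟨R.map Fin.castSucc, mem_union_left _ (mem_image_of_mem _ hR),
      hcov.map (Fin.castSucc_injective n)⟩

end Boundary

lemma aval_succ_le {n k ℓ : ℕ} (hk : 2 ≤ k) (hℓ : 1 ≤ ℓ) (hℓk : ℓ ≤ k) :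
    aval (n + 1) k ℓ ≤ aval n k ℓ + k * (n + 1) ^ (k - 2) := by
  obtain ⟨S, hS, hScard⟩ := exists_isCover_card_eq_aval (n := n) hℓk
  have : Nontrivial (Fin k) := Fin.nontrivial_iff_two_le.2 hk
  choose j hj using fun i : Fin k => exists_ne i
  have hdirections (d : Fin k) : ∃ D : Finset (Fin k), d ∈ D ∧ #D = ℓ := by
    obtain ⟨D, hdD, -, hD⟩ := exists_subsuperset_card_eq (subset_univ {d})
      (by simpa using hℓ) (by simpa using hℓk)
    exact ⟨D, hdD (mem_singleton_self d), hD⟩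
  choose D hD hDcard using hdirections
  calc aval (n + 1) k ℓ
      ≤ #(S.image (Rook.map Fin.castSucc) ∪ boundaryRooks j D) :=
        aval_le_card (isCover_image_map_castSucc_union_boundaryRooks hS hj hD hDcard)
    _ ≤ #S + #(boundaryRooks (n := n) j D) :=
        (card_union_le _ _).trans (Nat.add_le_add_right card_image_le _)
    _ ≤ aval n k ℓ + k * (n + 1) ^ (k - 2) := by
        rw [hScard]; gcongr; exact card_boundaryRooks_le hj D

theorem aval_succ (n k ℓ : ℕ) (hn : 2 ≤ n) (hk : 2 ≤ k) (hℓ : 2 ≤ ℓ) (hlk : ℓ ≤ k) :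
    aval (n + 1) k ℓ ≤ aval n k ℓ + 2 ^ k * n ^ (k - 2) := by
  obtain ⟨m, rfl⟩ : ∃ m, k = m + 2 := ⟨k - 2, by omega⟩
  calc aval (n + 1) (m + 2) ℓ ≤ aval n (m + 2) ℓ + (m + 2) * (n + 1) ^ m :=
        aval_succ_le hk (by omega) hlk
    _ ≤ aval n (m + 2) ℓ + 2 ^ (m + 2) * n ^ m :=
        Nat.add_le_add_left (add_two_mul_succ_pow_le hn m) _
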